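/- arXiv:1508.05674 — 5 statements merged into one kernel-verified Lean document; each statement's English description precedes it below -/
import Mathlib

section
/- Let n = 2m with m ≥ 1, and let γ : 𝔽₂^m → 𝔽₂ be any Boolean function. Then the Boolean function f on 𝔽₂^n defined by f(x₀,…,x_{n-1}) = Σ_{i=0}^{m-1} x_i·x_{i+m} + γ(x₀+x_m, x₁+x_{m+1}, …, x_{m-1}+x_{2m-1}) is a bent function. -/
/-- The Walsh transform of a Boolean function `f : 𝔽₂ⁿ → 𝔽₂` at `b ∈ 𝔽₂ⁿ`:
`W_f(b) = Σ_{x ∈ 𝔽₂ⁿ} (-1)^{f(x) + Σᵢ xᵢ bᵢ}`, the exponent lifted from `𝔽₂` to `{0,1} ⊆ ℤ`. -/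
def walshTransform {n : ℕ} [NeZero n] (f : (ZMod n → ZMod 2) → ZMod 2)
    (b : ZMod n → ZMod 2) : ℤ :=
  ∑ x : ZMod n → ZMod 2, (-1 : ℤ) ^ (f x + ∑ i : ZMod n, x i * b i).val

/-- `f` is bent if `W_f(b) = ±2^{n/2}` for every `b`. -/
def IsBent {n : ℕ} [NeZero n] (f : (ZMod n → ZMod 2) → ZMod 2) : Prop :=
  ∀ b, walshTransform f b = 2 ^ (n / 2) ∨ walshTransform f b = -(2 ^ (n / 2))

def chi (a : ZMod 2) : ℤ := (-1) ^ a.val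

lemma chi_add : ∀ a b : ZMod 2, chi (a + b) = chi a * chi b := by decide

lemma chi_sum {ι : Type*} (s : Finset ι) (g : ι → ZMod 2) :
    chi (∑ j ∈ s, g j) = ∏ j ∈ s, chi (g j) := by
  induction s using Finset.cons_induction with
  | empty => simp [chi]
  | cons a s ha ih => rw [Finset.sum_cons, Finset.prod_cons, chi_add, ih]

lemma sum_zmod {M : Type*} [AddCommMonoid M] (N : ℕ) [NeZero N] (g : ZMod N → M) :
    ∑ i : ZMod N, g i = ∑ k ∈ Finset.range N, g (k : ZMod N) := by
  refine (Finset.sum_nbij' (fun k => ((k : ℕ) : ZMod N)) (fun i => i.val) ?_ ?_ ?_ ?_ ?_).symm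
  · intro k hk; exact Finset.mem_univ _
  · intro i _; simpa [Finset.mem_range] using ZMod.val_lt i
  · intro k hk; simp only [Finset.mem_range] at hk; exact ZMod.val_cast_of_lt hk
  · intro i _; exact ZMod.natCast_rightInverse i
  · intro k hk; rfl

lemma chi_pm : ∀ z : ZMod 2, chi z = 1 ∨ chi z = -1 := by decide

lemma ortho (m : ℕ) [NeZero m] (t : ZMod m → ZMod 2) :
    ∑ u : ZMod m → ZMod 2, chi (∑ j : ZMod m, u j * t j) =
      if t = 0 then 2 ^ m else 0 := by
  have h1 : ∀ u : ZMod m → ZMod 2,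
      chi (∑ j : ZMod m, u j * t j) = ∏ j : ZMod m, chi (u j * t j) :=
    fun u => chi_sum _ _
  simp_rw [h1]
  rw [← Fintype.prod_sum (fun j e => chi (e * t j))]
  have h2 : ∀ s : ZMod 2, (∑ e : ZMod 2, chi (e * s)) = if s = 0 then 2 else 0 := by decide
  simp_rw [h2]
  by_cases ht : t = 0
  · subst ht; simp [ZMod.card]
  · rw [if_neg ht]
    obtain ⟨j0, hj0⟩ : ∃ j, t j ≠ 0 := by
      by_contra h; push_neg at h; exact ht (funext h)
    exact Finset.prod_eq_zero (Finset.mem_univ j0) (by simp [hj0])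

def glue (m : ℕ) (u v : ZMod m → ZMod 2) : ZMod (2 * m) → ZMod 2 :=
  fun i => if i.val < m then u ((i.val : ℕ) : ZMod m) else v (((i.val - m : ℕ)) : ZMod m)

lemma val_cast_lt (m : ℕ) [NeZero m] (k : ℕ) (hk : k < 2 * m) :
    ((k : ZMod (2 * m))).val = k :=
  ZMod.val_cast_of_lt hk

def glueEquiv (m : ℕ) [NeZero m] :
    ((ZMod m → ZMod 2) × (ZMod m → ZMod 2)) ≃ (ZMod (2 * m) → ZMod 2) where
  toFun p := glue m p.1 p.2
  invFun x := (fun j => x ((j.val : ℕ) : ZMod (2 * m)),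
               fun j => x (((j.val + m : ℕ)) : ZMod (2 * m)))
  left_inv := by
    rintro ⟨u, v⟩
    have hm : 0 < m := Nat.pos_of_ne_zero (NeZero.ne m)
    ext j
    · have h1 : ((j.val : ZMod (2 * m))).val = j.val :=
        val_cast_lt m _ (by have := ZMod.val_lt j; omega)
      simp only [glue, h1, ZMod.val_lt j, if_pos]
      rw [ZMod.natCast_rightInverse j]
    · have hjv := ZMod.val_lt j
      have h1 : (((j.val + m : ℕ) : ZMod (2 * m))).val = j.val + m :=
        val_cast_lt m _ (by omega)
      simp only [glue, h1]
      rw [if_neg (by omega)]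
      have : j.val + m - m = j.val := by omega
      rw [this, ZMod.natCast_rightInverse j]
  right_inv := by
    intro x
    have hm : 0 < m := Nat.pos_of_ne_zero (NeZero.ne m)
    funext i
    have hiv : i.val < 2 * m := ZMod.val_lt i
    by_cases h : i.val < m
    · simp only [glue, if_pos h]
      have h1 : ((i.val : ZMod m)).val = i.val := ZMod.val_cast_of_lt h
      rw [h1, ZMod.natCast_rightInverse i]
    · simp only [glue, if_neg h]
      have h1 : (((i.val - m : ℕ) : ZMod m)).val = i.val - m :=
        ZMod.val_cast_of_lt (by omega)
      rw [h1]
      have : i.val - m + m = i.val := by omega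
      rw [this, ZMod.natCast_rightInverse i]



lemma glue_apply_lt (m : ℕ) [NeZero m] (u v : ZMod m → ZMod 2) (k : ℕ) (hk : k < m) :
    glue m u v ((k : ℕ) : ZMod (2 * m)) = u ((k : ℕ) : ZMod m) := by
  have h1 : ((k : ZMod (2 * m))).val = k := ZMod.val_cast_of_lt (by omega)
  simp only [glue, h1, if_pos hk]

lemma glue_apply_ge (m : ℕ) [NeZero m] (u v : ZMod m → ZMod 2) (k : ℕ) (hk : k < m) :
    glue m u v (((k + m : ℕ)) : ZMod (2 * m)) = v ((k : ℕ) : ZMod m) := by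
  have h1 : (((k + m : ℕ) : ZMod (2 * m))).val = k + m := ZMod.val_cast_of_lt (by omega)
  simp only [glue, h1]
  rw [if_neg (by omega)]
  congr 2
  omega


/-- with `n = 2m`, `m ≥ 1`, and any Boolean function `γ` on `𝔽₂^m`, the function
`f(x₀,…,x_{n-1}) = Σ_{i=0}^{m-1} xᵢ·x_{i+m} + γ(x₀+x_m, …, x_{m-1}+x_{2m-1})` is bent. -/
theorem statement0 (m : ℕ) (hm : 1 ≤ m) [NeZero m]
    (γ : (ZMod m → ZMod 2) → ZMod 2)
    (f : (ZMod (2 * m) → ZMod 2) → ZMod 2)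
    (hf : ∀ x : ZMod (2 * m) → ZMod 2,
      f x = ∑ i ∈ Finset.range m, x i * x (i + m) +
        γ (fun j : ZMod m => x j.val + x (j.val + m : ZMod (2 * m)))) :
    IsBent f := by
  intro b
  -- abbreviations for the two halves of b
  set a : ZMod m → ZMod 2 := fun j => b ((j.val : ℕ) : ZMod (2 * m)) with ha
  set c : ZMod m → ZMod 2 := fun j => b (((j.val + m : ℕ)) : ZMod (2 * m)) with hc
  -- value of f on glued inputs
  have hval : ∀ j : ZMod m, ((j.val : ℕ) : ZMod m) = j := fun j => ZMod.natCast_rightInverse j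
  have hfg : ∀ u v : ZMod m → ZMod 2,
      f (glue m u v) = (∑ j : ZMod m, u j * v j) + γ (u + v) := by
    intro u v
    rw [hf]
    congr 1
    · rw [sum_zmod m (fun j => u j * v j)]
      refine Finset.sum_congr rfl fun k hk => ?_
      rw [Finset.mem_range] at hk
      rw [show ((k : ZMod (2*m)) + (m : ZMod (2*m))) = (((k + m : ℕ)) : ZMod (2*m)) by push_cast; ring,
        glue_apply_lt m u v k hk, glue_apply_ge m u v k hk]
    · congr 1
      funext j
      have hj : j.val < m := ZMod.val_lt j
      rw [show (((j.val : ℕ) : ZMod (2*m)) + (m : ZMod (2*m))) = (((j.val + m : ℕ)) : ZMod (2*m)) by push_cast; ring,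
        glue_apply_lt m u v j.val hj, glue_apply_ge m u v j.val hj, hval j]
      rfl
  -- value of the linear form on glued inputs
  have hlin : ∀ u v : ZMod m → ZMod 2,
      (∑ i : ZMod (2 * m), glue m u v i * b i) =
        (∑ j : ZMod m, u j * a j) + (∑ j : ZMod m, v j * c j) := by
    intro u v
    rw [sum_zmod (2 * m) (fun i => glue m u v i * b i),
      show Finset.range (2 * m) = Finset.range (m + m) by rw [two_mul],
      Finset.sum_range_add]
    congr 1
    · rw [sum_zmod m (fun j => u j * a j)]
      refine Finset.sum_congr rfl fun k hk => ?_
      rw [Finset.mem_range] at hk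
      rw [glue_apply_lt m u v k hk, ha]
      congr 2
      rw [ZMod.val_cast_of_lt hk]
    · rw [sum_zmod m (fun j => v j * c j)]
      refine Finset.sum_congr rfl fun k hk => ?_
      rw [Finset.mem_range] at hk
      rw [show (m + k) = (k + m) by ring, glue_apply_ge m u v k hk, hc]
      congr 2
      rw [ZMod.val_cast_of_lt hk]
  -- the target point
  set w0 : ZMod m → ZMod 2 := fun j => 1 + a j + c j with hw0
  -- the key Walsh computation
  have key : walshTransform f b = 2 ^ m * chi (γ w0 + ∑ j : ZMod m, w0 j * c j) := by
    have step1 : walshTransform f b =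
        ∑ p : (ZMod m → ZMod 2) × (ZMod m → ZMod 2),
          chi (f (glue m p.1 p.2) + ∑ i : ZMod (2 * m), glue m p.1 p.2 i * b i) := by
      rw [walshTransform]
      exact ((glueEquiv m).sum_comp
        (fun x => chi (f x + ∑ i : ZMod (2 * m), x i * b i))).symm
    rw [step1, Fintype.sum_prod_type]
    have step2 : ∀ u : ZMod m → ZMod 2,
        (∑ v : ZMod m → ZMod 2,
          chi (f (glue m u v) + ∑ i : ZMod (2 * m), glue m u v i * b i)) =
        ∑ w : ZMod m → ZMod 2,
          chi (f (glue m u (u + w)) + ∑ i : ZMod (2 * m), glue m u (u + w) i * b i) := by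
      intro u
      exact (Equiv.sum_comp (Equiv.addLeft u)
        (fun v => chi (f (glue m u v) + ∑ i : ZMod (2 * m), glue m u v i * b i))).symm
    simp_rw [step2]
    rw [Finset.sum_comm]
    -- simplify the exponent for fixed u, w
    have expo : ∀ u w : ZMod m → ZMod 2,
        (f (glue m u (u + w)) + ∑ i : ZMod (2 * m), glue m u (u + w) i * b i) =
        (∑ j : ZMod m, u j * (1 + w j + a j + c j)) +
          (γ w + ∑ j : ZMod m, w j * c j) := by
      intro u w
      rw [hfg, hlin]
      have huw : u + (u + w) = w := by
        funext j
        show u j + (u j + w j) = w j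
        have : ∀ x y : ZMod 2, x + (x + y) = y := by decide
        exact this _ _
      rw [huw]
      have comb : ((∑ j : ZMod m, u j * (u + w) j) +
          ((∑ j : ZMod m, u j * a j) + (∑ j : ZMod m, (u + w) j * c j))) =
          (∑ j : ZMod m, u j * (1 + w j + a j + c j)) + (∑ j : ZMod m, w j * c j) := by
        rw [← Finset.sum_add_distrib, ← Finset.sum_add_distrib, ← Finset.sum_add_distrib]
        refine Finset.sum_congr rfl fun j _ => ?_
        show u j * (u j + w j) + (u j * a j + (u j + w j) * c j) =
          u j * (1 + w j + a j + c j) + w j * c j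
        have : ∀ x y p q : ZMod 2,
            x * (x + y) + (x * p + (x + y) * q) = x * (1 + y + p + q) + y * q := by decide
        exact this _ _ _ _
      calc (∑ j : ZMod m, u j * (u + w) j) + γ w +
            ((∑ j : ZMod m, u j * a j) + (∑ j : ZMod m, (u + w) j * c j))
          = ((∑ j : ZMod m, u j * (u + w) j) +
            ((∑ j : ZMod m, u j * a j) + (∑ j : ZMod m, (u + w) j * c j))) + γ w := by ring
        _ = ((∑ j : ZMod m, u j * (1 + w j + a j + c j)) + (∑ j : ZMod m, w j * c j)) + γ w := by
            rw [comb]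
        _ = _ := by ring
    simp_rw [expo]
    have inner : ∀ w : ZMod m → ZMod 2,
        (∑ u : ZMod m → ZMod 2,
          chi ((∑ j : ZMod m, u j * (1 + w j + a j + c j)) +
            (γ w + ∑ j : ZMod m, w j * c j))) =
        (if w = w0 then (2:ℤ) ^ m * chi (γ w0 + ∑ j : ZMod m, w0 j * c j) else 0) := by
      intro w
      simp_rw [chi_add]
      rw [← Finset.sum_mul, ortho m (fun j => 1 + w j + a j + c j)]
      have hiff : ((fun j => 1 + w j + a j + c j) = 0) ↔ w = w0 := by
        rw [funext_iff, funext_iff]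
        constructor <;> intro h j <;> have hj := h j
        · have : ∀ x p q : ZMod 2, 1 + x + p + q = 0 → x = 1 + p + q := by decide
          exact this _ _ _ hj
        · rw [hw0] at hj
          have : ∀ x p q : ZMod 2, x = 1 + p + q → 1 + x + p + q = 0 := by decide
          exact this _ _ _ hj
      by_cases hw : w = w0
      · rw [if_pos (hiff.mpr hw), if_pos hw, hw]
      · rw [if_neg (fun h => hw (hiff.mp h)), if_neg hw, zero_mul]
    simp_rw [inner]
    rw [Finset.sum_ite_eq' Finset.univ w0
      (fun _ => (2:ℤ) ^ m * chi (γ w0 + ∑ j : ZMod m, w0 j * c j)), if_pos (Finset.mem_univ _)]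
  rw [key, show (2 * m) / 2 = m by omega]
  rcases chi_pm (γ w0 + ∑ j : ZMod m, w0 j * c j) with h | h <;> rw [h]
  · left; ring
  · right; ring
end

section
/- Let n = 2m with m ≥ 1, and let γ : 𝔽₂^m → 𝔽₂ be a rotation symmetric Boolean function. Then the Boolean function f on 𝔽₂^n defined by f(x₀,…,x_{n-1}) = Σ_{i=0}^{m-1} x_i·x_{i+m} + γ(x₀+x_m, x₁+x_{m+1}, …, x_{m-1}+x_{2m-1}) is rotation symmetric, i.e., f(x₁,x₂,…,x_{n-1},x₀) = f(x₀,x₁,…,x_{n-1}) for all x ∈ 𝔽₂^n. -/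
/-- A Boolean function `f` on `𝔽₂ⁿ` (coordinates indexed modulo `n`) is rotation symmetric if
`f(x₁,…,x_{n-1},x₀) = f(x₀,…,x_{n-1})` for all `x`. -/
def RotationSymmetric {n : ℕ} (f : (ZMod n → ZMod 2) → ZMod 2) : Prop :=
  ∀ x : ZMod n → ZMod 2, f (fun i => x (i + 1)) = f x

/-- with `n = 2m`, `m ≥ 1`, and `γ` a rotation symmetric Boolean function on `𝔽₂^m`,
the function `f(x₀,…,x_{n-1}) = Σ_{i=0}^{m-1} xᵢ·x_{i+m} + γ(x₀+x_m, …, x_{m-1}+x_{2m-1})`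
is rotation symmetric. -/
theorem statement1 (m : ℕ) (hm : 1 ≤ m) [NeZero m]
    (γ : (ZMod m → ZMod 2) → ZMod 2) (hγ : RotationSymmetric γ)
    (f : (ZMod (2 * m) → ZMod 2) → ZMod 2)
    (hf : ∀ x : ZMod (2 * m) → ZMod 2,
      f x = ∑ i ∈ Finset.range m, x i * x (i + m) +
        γ (fun j : ZMod m => x j.val + x (j.val + m : ZMod (2 * m)))) :
    RotationSymmetric f := by
  intro x
  rw [hf, hf]
  congr 1
  · -- quadratic part
    set h : ℕ → ZMod 2 := fun k => x (k : ZMod (2*m)) * x ((k : ZMod (2*m)) + (m : ZMod (2*m))) with hh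
    have step1 : ∑ i ∈ Finset.range m, x ((i : ZMod (2*m)) + 1) * x ((i : ZMod (2*m)) + m + 1)
        = ∑ i ∈ Finset.range m, h (i + 1) := by
      apply Finset.sum_congr rfl
      intro i _
      simp only [hh]
      push_cast
      ring_nf
    rw [step1]
    have e1 : (∑ i ∈ Finset.range m, h (i + 1)) + h 0 = (∑ i ∈ Finset.range m, h i) + h m := by
      rw [← Finset.sum_range_succ' h m, Finset.sum_range_succ h m]
    have e2 : h m = h 0 := by
      simp only [hh]
      have : ((m : ZMod (2*m)) + (m : ZMod (2*m))) = 0 := by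
        have : ((2 * m : ℕ) : ZMod (2*m)) = 0 := ZMod.natCast_self _
        push_cast at this
        linear_combination this
      rw [this]
      simp [mul_comm]
    rw [e2] at e1
    exact add_right_cancel e1
  · -- gamma part
    have key := hγ (fun j : ZMod m => x ((j.val : ZMod (2*m))) + x ((j.val : ZMod (2*m)) + m))
    rw [← key]
    congr 1
    funext j
    -- goal: x (↑j.val + 1) + x (↑j.val + ↑m + 1) = x ↑(j+1).val + x (↑(j+1).val + ↑m)
    rcases eq_or_ne (j.val + 1) m with h1 | h1
    · have hj1 : (j + 1 : ZMod m) = 0 := by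
        have : ((j.val + 1 : ℕ) : ZMod m) = 0 := by rw [h1]; exact ZMod.natCast_self m
        push_cast at this
        rw [ZMod.natCast_val, ZMod.cast_id] at this
        exact this
      rw [hj1]
      have c1 : ((j.val : ZMod (2*m)) + 1) = (m : ZMod (2*m)) := by
        have : ((j.val + 1 : ℕ) : ZMod (2*m)) = ((m : ℕ) : ZMod (2*m)) := by rw [h1]
        push_cast at this
        exact this
      have c2 : ((j.val : ZMod (2*m)) + (m : ZMod (2*m)) + 1) = 0 := by
        have h2m : ((2 * m : ℕ) : ZMod (2*m)) = 0 := ZMod.natCast_self _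
        push_cast at h2m
        linear_combination c1 + h2m
      rw [c1, c2]
      simp [add_comm]
    · have hjv : j.val < m := ZMod.val_lt j
      have hlt : j.val + 1 < m := lt_of_le_of_ne hjv h1
      have hm2 : 1 < m := lt_of_le_of_lt (Nat.le_add_left 1 j.val) hlt
      have hv : (j + 1 : ZMod m).val = j.val + 1 := by
        have : (1 : ZMod m).val = 1 := ZMod.val_one_eq_one_mod m ▸ Nat.mod_eq_of_lt hm2
        rw [ZMod.val_add, this, Nat.mod_eq_of_lt hlt]
      rw [hv]
      push_cast
      ring_nf
end

section
/- Let n = 2m with m ≥ 1, and let γ : 𝔽₂^m → 𝔽₂ be a Boolean function of algebraic degree d with d ≥ 2. Then the Boolean function f on 𝔽₂^n defined by f(x₀,…,x_{n-1}) = Σ_{i=0}^{m-1} x_i·x_{i+m} + γ(x₀+x_m, x₁+x_{m+1}, …, x_{m-1}+x_{2m-1}) has algebraic degree d. -/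
/-- A Boolean function `f` on `𝔽₂ⁿ` has algebraic degree `d` if its (unique) algebraic normal
form — a multilinear polynomial over `𝔽₂` representing `f` — has total degree `d`. -/
def HasAlgebraicDegree {n : ℕ} (f : (ZMod n → ZMod 2) → ZMod 2) (d : ℕ) : Prop :=
  ∃ p : MvPolynomial (ZMod n) (ZMod 2),
    (∀ s ∈ p.support, ∀ i, s i ≤ 1) ∧
    (∀ x, MvPolynomial.eval x p = f x) ∧
    p.totalDegree = d

/-!
Let `q` be the algebraic normal form of `γ`, so that `f` is represented by
`P = ∑ Xᵢ X_{i+m} + q(X₀ + X_m, …, X_{m-1} + X_{2m-1})`.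
`P` is again multilinear: the linear forms `X_j + X_{j+m}` involve pairwise disjoint variables, so
substituting them into the multilinear `q` never multiplies a variable by itself. Substituting
linear forms does not raise the degree, so `deg P ≤ max 2 d = d`. Conversely, setting
`X_m, …, X_{2m-1}` to zero kills the quadratic part and turns the second summand back into `q`;
this specialisation cannot raise the degree either, so `d ≤ deg P`.
-/

namespace MvPolynomial

open Function

variable {σ τ R : Type*} [CommSemiring R]

theorem totalDegree_X_le (s : σ) : (X s : MvPolynomial σ R).totalDegree ≤ 1 :=
  (totalDegree_monomial_le _ _).trans_eq (Finsupp.sum_single_index rfl)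

theorem totalDegree_X_add_X_le (a b : σ) : (X a + X b : MvPolynomial σ R).totalDegree ≤ 1 :=
  (totalDegree_add _ _).trans (max_le (totalDegree_X_le a) (totalDegree_X_le b))

theorem totalDegree_bind₁_le {g : σ → MvPolynomial τ R} {k : ℕ}
    (hg : ∀ i, (g i).totalDegree ≤ k) (p : MvPolynomial σ R) :
    (bind₁ g p).totalDegree ≤ p.totalDegree * k := by
  conv_lhs => rw [p.as_sum, map_sum]
  refine totalDegree_finsetSum_le fun s hs => ?_
  rw [bind₁_monomial]
  calc (C (coeff s p) * ∏ i ∈ s.support, g i ^ s i).totalDegree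
      ≤ ∑ i ∈ s.support, s i * (g i).totalDegree := by
        refine (totalDegree_mul _ _).trans ?_
        rw [totalDegree_C, zero_add]
        exact (totalDegree_finsetProd _ _).trans
          (Finset.sum_le_sum fun i _ => totalDegree_pow _ _)
    _ ≤ ∑ i ∈ s.support, s i * k := Finset.sum_le_sum fun i _ => Nat.mul_le_mul_left _ (hg i)
    _ = (s.sum fun _ e => e) * k := by rw [← Finset.sum_mul, Finsupp.sum]
    _ ≤ p.totalDegree * k := Nat.mul_le_mul_right _ (le_totalDegree hs)

theorem mem_restrictDegree_iff_degreeOf_le {p : MvPolynomial σ R} {n : ℕ} :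
    p ∈ restrictDegree σ R n ↔ ∀ i, p.degreeOf i ≤ n := by
  simp only [mem_restrictDegree, degreeOf_le_iff]
  exact ⟨fun h i s hs => h s hs i, fun h s hs i => h i s hs⟩

theorem X_mul_X_mem_restrictDegree_one [Nontrivial R] {a b : σ} (h : a ≠ b) :
    (X a * X b : MvPolynomial σ R) ∈ restrictDegree σ R 1 := by
  classical
  refine mem_restrictDegree_iff_degreeOf_le.2 fun i => (degreeOf_mul_le i _ _).trans ?_
  simp only [degreeOf_X]
  split_ifs <;> simp_all

theorem X_add_X_mem_restrictDegree_one (a b : σ) :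
    (X a + X b : MvPolynomial σ R) ∈ restrictDegree σ R 1 :=
  restrictTotalDegree_le_restrictDegree σ R 1
    ((mem_restrictTotalDegree _ _ _).2 (totalDegree_X_add_X_le a b))

theorem pairwise_disjoint_vars_X_add_X [Nontrivial R] {a b : σ → τ} (ha : Injective a)
    (hb : Injective b) (hab : ∀ i j, a i ≠ b j) :
    Pairwise (Disjoint on fun i => (X (a i) + X (b i) : MvPolynomial τ R).vars) := by
  classical
  intro i j hij
  refine Finset.disjoint_of_subset_left (vars_add_subset _ _)
    (Finset.disjoint_of_subset_right (vars_add_subset _ _) ?_)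
  simp [vars_X, hab, (hab _ _).symm, ha.ne hij.symm, hb.ne hij.symm]

theorem sum_degreeOf_le_one_of_pairwise_disjoint_vars {g : σ → MvPolynomial τ R}
    (hg : ∀ i, g i ∈ restrictDegree τ R 1) (hdisj : Pairwise (Disjoint on fun i => (g i).vars))
    (S : Finset σ) (v : τ) : ∑ i ∈ S, (g i).degreeOf v ≤ 1 := by
  by_cases hv : ∃ i ∈ S, v ∈ (g i).vars
  · obtain ⟨i, hi, hvi⟩ := hv
    rw [Finset.sum_eq_single i (fun j _ hji => ?_) (fun h => absurd hi h)]
    · exact mem_restrictDegree_iff_degreeOf_le.1 (hg i) v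
    by_contra hvj
    exact Finset.disjoint_left.1 (hdisj hji) (mem_vars_iff_degreeOf_ne_zero.2 hvj) hvi
  · push Not at hv
    rw [Finset.sum_eq_zero fun i hi => ?_]
    · exact zero_le_one
    by_contra hvi
    exact hv i hi (mem_vars_iff_degreeOf_ne_zero.2 hvi)

theorem bind₁_mem_restrictDegree_one {g : σ → MvPolynomial τ R} {p : MvPolynomial σ R}
    (hp : p ∈ restrictDegree σ R 1) (hg : ∀ i, g i ∈ restrictDegree τ R 1)
    (hdisj : Pairwise (Disjoint on fun i => (g i).vars)) :
    bind₁ g p ∈ restrictDegree τ R 1 := by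
  rw [p.as_sum, map_sum]
  refine sum_mem fun s hs => ?_
  have hs_one : ∀ i ∈ s.support, s i = 1 := fun i hi =>
    le_antisymm ((mem_restrictDegree _ _ _).1 hp s hs i)
      (Nat.one_le_iff_ne_zero.2 (Finsupp.mem_support_iff.1 hi))
  rw [bind₁_monomial, Finset.prod_congr rfl fun i hi => by rw [hs_one i hi, pow_one]]
  refine mem_restrictDegree_iff_degreeOf_le.2 fun v =>
    (degreeOf_C_mul_le _ _ _).trans ((degreeOf_prod_le _ _ _).trans ?_)
  exact sum_degreeOf_le_one_of_pairwise_disjoint_vars hg hdisj _ v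

theorem killCompl_X_apply {f : σ → τ} (hf : Injective f) (i : σ) :
    killCompl hf (X (f i) : MvPolynomial τ R) = X i := by
  simpa only [rename_X] using killCompl_rename_app hf (X i : MvPolynomial σ R)

theorem killCompl_X_of_notMem_range {f : σ → τ} (hf : Injective f) {t : τ}
    (ht : t ∉ Set.range f) : killCompl hf (X t : MvPolynomial τ R) = 0 := by
  rw [killCompl, aeval_X, dif_neg ht]

theorem killCompl_bind₁ {υ : Type*} {f : σ → τ} (hf : Injective f) (g : υ → MvPolynomial τ R)
    (p : MvPolynomial υ R) : killCompl hf (bind₁ g p) = bind₁ (fun i => killCompl hf (g i)) p :=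
  comp_aeval_apply (f := g) (killCompl hf) p

theorem totalDegree_killCompl_le {f : σ → τ} (hf : Injective f) (p : MvPolynomial τ R) :
    (killCompl hf p).totalDegree ≤ p.totalDegree := by
  have hX : ∀ t, (killCompl hf (X t : MvPolynomial τ R)).totalDegree ≤ 1 := fun t => by
    by_cases ht : t ∈ Set.range f
    · obtain ⟨i, rfl⟩ := ht
      rw [killCompl_X_apply]
      exact totalDegree_X_le i
    · rw [killCompl_X_of_notMem_range hf ht, totalDegree_zero]
      exact zero_le_one
  calc (killCompl hf p).totalDegree
      = (bind₁ (fun t => killCompl hf (X t : MvPolynomial τ R)) p).totalDegree := by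
        rw [← killCompl_bind₁, bind₁_X_left, AlgHom.id_apply]
    _ ≤ p.totalDegree * 1 := totalDegree_bind₁_le hX p
    _ = p.totalDegree := mul_one _

theorem eval_bind₁ (x : τ → R) (g : σ → MvPolynomial τ R) (p : MvPolynomial σ R) :
    eval x (bind₁ g p) = eval (fun i => eval x (g i)) p :=
  eval₂Hom_bind₁ _ _ _ _

end MvPolynomial

open MvPolynomial

section Halves

variable (m : ℕ) (R : Type*) [CommSemiring R]

def lowIndex (j : ZMod m) : ZMod (2 * m) := j.val

def highIndex (j : ZMod m) : ZMod (2 * m) := j.val + m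

theorem val_lowIndex [NeZero m] (j : ZMod m) : (lowIndex m j).val = j.val :=
  ZMod.val_natCast_of_lt (by have := j.val_lt; omega)

theorem val_highIndex [NeZero m] (j : ZMod m) : (highIndex m j).val = j.val + m := by
  rw [highIndex, ← Nat.cast_add]
  exact ZMod.val_natCast_of_lt (by have := j.val_lt; omega)

theorem lowIndex_injective [NeZero m] : Function.Injective (lowIndex m) := fun i j h =>
  ZMod.val_injective m (by simpa only [val_lowIndex] using congrArg ZMod.val h)

theorem highIndex_injective [NeZero m] : Function.Injective (highIndex m) := fun i j h =>
  ZMod.val_injective m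
    (by simpa only [val_highIndex, Nat.add_right_cancel_iff] using congrArg ZMod.val h)

theorem lowIndex_ne_highIndex [NeZero m] (i j : ZMod m) : lowIndex m i ≠ highIndex m j :=
  fun h => by
    have := congrArg ZMod.val h
    rw [val_lowIndex, val_highIndex] at this
    have := i.val_lt
    omega

theorem highIndex_notMem_range_lowIndex [NeZero m] (j : ZMod m) :
    highIndex m j ∉ Set.range (lowIndex m) :=
  fun ⟨i, hi⟩ => lowIndex_ne_highIndex m i j hi

noncomputable def dotPoly : MvPolynomial (ZMod (2 * m)) R :=
  ∑ i ∈ Finset.range m, X (i : ZMod (2 * m)) * X ((i : ZMod (2 * m)) + m)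

noncomputable def lowAddHigh (j : ZMod m) : MvPolynomial (ZMod (2 * m)) R :=
  X (lowIndex m j) + X (highIndex m j)

theorem dotPoly_eq_sum_lowIndex_highIndex :
    dotPoly m R = ∑ i ∈ Finset.range m, X (lowIndex m i) * X (highIndex m i) :=
  Finset.sum_congr rfl fun i hi => by
    rw [highIndex, lowIndex, ZMod.val_natCast_of_lt (Finset.mem_range.1 hi)]

theorem eval_dotPoly (x : ZMod (2 * m) → R) :
    eval x (dotPoly m R) = ∑ i ∈ Finset.range m, x i * x (i + m) := by
  simp only [dotPoly, map_sum, map_mul, eval_X]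

theorem totalDegree_dotPoly_le : (dotPoly m R).totalDegree ≤ 2 :=
  totalDegree_finsetSum_le fun _ _ =>
    (totalDegree_mul _ _).trans (add_le_add (totalDegree_X_le _) (totalDegree_X_le _))

theorem dotPoly_mem_restrictDegree_one [NeZero m] [Nontrivial R] :
    dotPoly m R ∈ restrictDegree (ZMod (2 * m)) R 1 := by
  rw [dotPoly_eq_sum_lowIndex_highIndex]
  exact sum_mem fun _ _ => X_mul_X_mem_restrictDegree_one (lowIndex_ne_highIndex m _ _)

theorem killCompl_dotPoly [NeZero m] : killCompl (lowIndex_injective m) (dotPoly m R) = 0 := by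
  rw [dotPoly_eq_sum_lowIndex_highIndex, map_sum]
  refine Finset.sum_eq_zero fun i _ => ?_
  rw [map_mul, killCompl_X_of_notMem_range _ (highIndex_notMem_range_lowIndex m _), mul_zero]

theorem eval_bind₁_lowAddHigh (x : ZMod (2 * m) → R) (q : MvPolynomial (ZMod m) R) :
    eval x (bind₁ (lowAddHigh m R) q) =
      eval (fun j : ZMod m => x j.val + x (j.val + m : ZMod (2 * m))) q := by
  simp only [eval_bind₁, lowAddHigh, map_add, eval_X, lowIndex, highIndex]

theorem bind₁_lowAddHigh_mem_restrictDegree_one [NeZero m] [Nontrivial R]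
    {q : MvPolynomial (ZMod m) R} (hq : q ∈ restrictDegree (ZMod m) R 1) :
    bind₁ (lowAddHigh m R) q ∈ restrictDegree (ZMod (2 * m)) R 1 :=
  bind₁_mem_restrictDegree_one hq (fun _ => X_add_X_mem_restrictDegree_one _ _)
    (pairwise_disjoint_vars_X_add_X (lowIndex_injective m) (highIndex_injective m)
      (lowIndex_ne_highIndex m))

theorem totalDegree_bind₁_lowAddHigh_le (q : MvPolynomial (ZMod m) R) :
    (bind₁ (lowAddHigh m R) q).totalDegree ≤ q.totalDegree :=
  (totalDegree_bind₁_le (fun _ => totalDegree_X_add_X_le _ _) q).trans_eq (mul_one _)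

theorem killCompl_bind₁_lowAddHigh [NeZero m] (q : MvPolynomial (ZMod m) R) :
    killCompl (lowIndex_injective m) (bind₁ (lowAddHigh m R) q) = q := by
  simp only [killCompl_bind₁, lowAddHigh, map_add, killCompl_X_apply,
    killCompl_X_of_notMem_range _ (highIndex_notMem_range_lowIndex m _), add_zero]
  rw [bind₁_X_left, AlgHom.id_apply]

end Halves

theorem statement2_general (m : ℕ) [NeZero m]
    (d : ℕ) (hd : 2 ≤ d)
    (γ : (ZMod m → ZMod 2) → ZMod 2) (hγ : HasAlgebraicDegree γ d)
    (f : (ZMod (2 * m) → ZMod 2) → ZMod 2)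
    (hf : ∀ x : ZMod (2 * m) → ZMod 2,
      f x = ∑ i ∈ Finset.range m, x i * x (i + m) +
        γ (fun j : ZMod m => x j.val + x (j.val + m : ZMod (2 * m)))) :
    HasAlgebraicDegree f d := by
  obtain ⟨q, hq_multilinear, hq_eval, rfl⟩ := hγ
  set P := dotPoly m (ZMod 2) + bind₁ (lowAddHigh m (ZMod 2)) q
  have hP_multilinear : P ∈ restrictDegree (ZMod (2 * m)) (ZMod 2) 1 :=
    add_mem (dotPoly_mem_restrictDegree_one m _) (bind₁_lowAddHigh_mem_restrictDegree_one m _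
      ((mem_restrictDegree _ _ _).2 hq_multilinear))
  have hP_eval (x : ZMod (2 * m) → ZMod 2) : eval x P = f x := by
    rw [hf, map_add, eval_dotPoly, eval_bind₁_lowAddHigh, hq_eval]
  have hP_deg_le : P.totalDegree ≤ q.totalDegree :=
    (totalDegree_add _ _).trans
      (max_le ((totalDegree_dotPoly_le m _).trans hd) (totalDegree_bind₁_lowAddHigh_le m _ q))
  have hP_deg_ge : q.totalDegree ≤ P.totalDegree :=
    calc q.totalDegree = (killCompl (lowIndex_injective m) P).totalDegree := by
          rw [map_add, killCompl_dotPoly, killCompl_bind₁_lowAddHigh, zero_add]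
      _ ≤ P.totalDegree := totalDegree_killCompl_le _ _
  exact ⟨P, (mem_restrictDegree _ _ _).1 hP_multilinear, hP_eval,
    le_antisymm hP_deg_le hP_deg_ge⟩

/-- with `n = 2m`, `m ≥ 1`, and `γ` a Boolean function on `𝔽₂^m` of algebraic
degree `d ≥ 2`, the function
`f(x₀,…,x_{n-1}) = Σ_{i=0}^{m-1} xᵢ·x_{i+m} + γ(x₀+x_m, …, x_{m-1}+x_{2m-1})`
has algebraic degree `d`. -/
theorem statement2 (m : ℕ) (hm : 1 ≤ m) [NeZero m]
    (d : ℕ) (hd : 2 ≤ d)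
    (γ : (ZMod m → ZMod 2) → ZMod 2) (hγ : HasAlgebraicDegree γ d)
    (f : (ZMod (2 * m) → ZMod 2) → ZMod 2)
    (hf : ∀ x : ZMod (2 * m) → ZMod 2,
      f x = ∑ i ∈ Finset.range m, x i * x (i + m) +
        γ (fun j : ZMod m => x j.val + x (j.val + m : ZMod (2 * m)))) :
    HasAlgebraicDegree f d :=
  statement2_general m d hd γ hγ f hf
end

section
/- Let n = 2m with m ≥ 1, let t be an integer with 1 ≤ t ≤ m-1 such that m/gcd(m,t) is odd, and let γ : 𝔽₂^m → 𝔽₂ be any Boolean function. Then the Boolean function f_t on 𝔽₂^n defined by f_t(x₀,…,x_{n-1}) = Σ_{i=0}^{n-1} (x_i·x_{i+t}·x_{i+m} + x_i·x_{i+t}) + Σ_{i=0}^{m-1} x_i·x_{i+m} + γ(x₀+x_m, x₁+x_{m+1}, …, x_{m-1}+x_{2m-1}) is a bent function. -/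
set_option linter.unusedSectionVars false
set_option maxHeartbeats 1000000

lemma zm2 : ∀ a : ZMod 2, a = 0 ∨ a = 1 := by decide

lemma core_lemma (k : ℕ) (hk : Odd k) (D S : ℕ → ZMod 2)
    (hDper : ∀ j, D (j + k) = D j)
    (hSper : ∀ j, S (j + k) = S j)
    (hR : ∀ j, D (j+2) = S (j+1) * D j + D (j+1) * (1 + S j + D j))
    (hD0 : D 0 = 1) : False := by
  have hk0 : 0 < k := hk.pos
  have hperc : ∀ c j, D (j + c * k) = D j := by
    intro c
    induction c with
    | zero => simp
    | succ n ih =>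
      intro j
      rw [show j + (n+1) * k = j + n*k + k by ring, hDper, ih]
  -- no two adjacent zeros
  have nz : ∀ j, D j = 1 ∨ D (j+1) = 1 := by
    by_contra h
    push_neg at h
    obtain ⟨j, hj0, hj1⟩ := h
    have hj0 : D j = 0 := by have := zm2 (D j); tauto
    have hj1 : D (j+1) = 0 := by have := zm2 (D (j+1)); tauto
    have hzeros : ∀ i, D (j + i) = 0 ∧ D (j + i + 1) = 0 := by
      intro i
      induction i with
      | zero => exact ⟨hj0, hj1⟩
      | succ n ih =>
        refine ⟨by rw [show j + (n+1) = j + n + 1 by ring]; exact ih.2, ?_⟩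
        have h := hR (j + n)
        rw [ih.1, ih.2] at h
        rw [show j + (n+1) + 1 = j + n + 2 by ring, h]
        ring
    have h0 : D ((j+1) * k) = 1 := by
      have := hperc (j+1) 0
      simpa [hD0] using this
    have hle : j ≤ (j+1) * k := by
      calc j ≤ j + 1 := by omega
        _ ≤ (j+1) * k := Nat.le_mul_of_pos_right _ hk0
    have h1 : D ((j+1) * k) = 0 := by
      rw [show (j+1)*k = j + ((j+1)*k - j) by omega]
      exact (hzeros _).1
    rw [h0] at h1
    exact one_ne_zero h1
  by_cases hall : ∀ j, D j = 1
  · -- all ones: S alternates, contradiction with odd period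
    have hstep : ∀ j, S (j+1) = S j + 1 := by
      intro j
      have h := hR j
      rw [hall j, hall (j+1), hall (j+2)] at h
      have key : ∀ a b : ZMod 2, (1 : ZMod 2) = a * 1 + 1 * (1 + b + 1) → a = b + 1 := by decide
      exact key _ _ h
    have hlin : ∀ j, S j = S 0 + (j : ZMod 2) := by
      intro j
      induction j with
      | zero => simp
      | succ n ih => rw [hstep n, ih]; push_cast; ring
    have hkodd : ((k : ℕ) : ZMod 2) = 1 := by
      obtain ⟨c, hc⟩ := hk
      subst hc; push_cast
      have : (2 : ZMod 2) = 0 := by decide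
      rw [this]; ring
    have h1 : S k = S 0 := by have := hSper 0; simpa using this
    rw [hlin k, hkodd] at h1
    have : ∀ a : ZMod 2, a + 1 ≠ a := by decide
    exact this _ h1
  · push_neg at hall
    obtain ⟨j₁, hj₁⟩ := hall
    have hj₁ : D j₁ = 0 := by have := zm2 (D j₁); tauto
    set z := j₁ + k with hz
    have hzval : D z = 0 := by rw [hz, hDper]; exact hj₁
    have hz1 : 1 ≤ z := by omega
    -- at any zero position j ≥ 1 : S j = 1 and D (j+1) = 1
    have zeroS : ∀ i, D (i+1) = 0 → S (i+1) = 1 ∧ D (i+2) = 1 := by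
      intro i h0
      have hd2 : D (i+2) = 1 := by
        have := nz (i+1)
        rw [h0] at this
        simpa using this
      have hdi : D i = 1 := by
        have := nz i
        rcases this with h | h
        · exact h
        · rw [h0] at h; exact absurd h (by decide)
      have h := hR i
      rw [h0, hdi, hd2] at h
      have key : ∀ a b : ZMod 2, (1 : ZMod 2) = a * 1 + 0 * (1 + b + 1) → a = 1 := by decide
      exact ⟨key _ _ h, hd2⟩
    -- alternation: zeros at even offsets from z
    have alt : ∀ c, D (z + 2*c) = 0 := by
      intro c
      induction c with
      | zero => simpa using hzval
      | succ n ih =>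
        obtain ⟨i, hi⟩ : ∃ i, z + 2*n = i + 1 := ⟨z + 2*n - 1, by omega⟩
        rw [hi] at ih
        obtain ⟨hS, hD⟩ := zeroS i ih
        have h := hR (i+1)
        rw [ih, hD, hS] at h
        rw [show z + 2*(n+1) = i+1+2 by omega, h]
        have : (1:ZMod 2) * (1 + 1 + 0) = 0 := by decide
        rw [this, mul_zero, add_zero]
    obtain ⟨c, hc⟩ := hk
    have h1 : D (z + 2*c + 1) = 1 := by
      obtain ⟨i, hi⟩ : ∃ i, z + 2*c = i + 1 := ⟨z + 2*c - 1, by omega⟩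
      have hzero : D (i+1) = 0 := by rw [← hi]; exact alt c
      have := (zeroS i hzero).2
      rw [show z + 2*c + 1 = i + 2 by omega]
      exact this
    have h2 : D (z + 2*c + 1) = 0 := by
      rw [show z + 2*c + 1 = z + k by omega, hDper]
      exact hzval
    rw [h1] at h2
    exact one_ne_zero h2


def phiMap (m t : ℕ) : (ZMod m → ZMod 2) → (ZMod m → ZMod 2) :=
  fun s j => s j * s (j + (t : ZMod m)) + s j + s (j - (t : ZMod m)) + 1

lemma phiMap_bijective (m t : ℕ) [NeZero m] (hodd : Odd (m / Nat.gcd m t)) :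
    Function.Bijective (phiMap m t) := by
  have hinj : Function.Injective (phiMap m t) := ?_
  · exact Finite.injective_iff_bijective.mp hinj
  intro s s' heq
  by_contra hne
  have hex : ∃ i₀, s i₀ ≠ s' i₀ := by
    by_contra h
    push_neg at h
    exact hne (funext h)
  obtain ⟨i₀, hi₀⟩ := hex
  set τ : ZMod m := (t : ZMod m) with hτ
  set d : ZMod m → ZMod 2 := fun i => s i + s' i with hd
  have hd₀ : d i₀ = 1 := by
    have : ∀ a b : ZMod 2, a ≠ b → a + b = 1 := by decide
    exact this _ _ hi₀
  set k : ℕ := addOrderOf τ with hk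
  have hkodd : Odd k := by
    rw [hk, hτ, ZMod.addOrderOf_coe t (NeZero.ne m)]
    exact hodd
  have hrel : ∀ i : ZMod m, d (i - τ) = s i * d (i + τ) + d i * (1 + s (i + τ) + d (i + τ)) := by
    intro i
    have h := congrFun heq i
    unfold phiMap at h
    have key : ∀ a b c a' b' c' : ZMod 2,
        a*b + a + c + 1 = a'*b' + a' + c' + 1 →
        c + c' = a * (b + b') + (a + a') * (1 + b + (b + b')) := by decide
    exact key _ _ _ _ _ _ h
  set D : ℕ → ZMod 2 := fun j => d (i₀ - (j : ZMod m) * τ) with hD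
  set Sn : ℕ → ZMod 2 := fun j => s (i₀ - (j : ZMod m) * τ) with hSn
  have hkτ : (k : ZMod m) * τ = 0 := by
    rw [← nsmul_eq_mul]
    exact addOrderOf_nsmul_eq_zero τ
  have hDper : ∀ j, D (j + k) = D j := by
    intro j
    simp only [hD]
    congr 1
    push_cast
    rw [add_mul, hkτ, add_zero]
  have hSper : ∀ j, Sn (j + k) = Sn j := by
    intro j
    simp only [hSn]
    congr 1
    push_cast
    rw [add_mul, hkτ, add_zero]
  have hR : ∀ j, D (j+2) = Sn (j+1) * D j + D (j+1) * (1 + Sn j + D j) := by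
    intro j
    have h := hrel (i₀ - ((j:ZMod m) + 1) * τ)
    have e1 : i₀ - ((j:ZMod m) + 1) * τ - τ = i₀ - ((j:ZMod m) + 2) * τ := by ring
    have e2 : i₀ - ((j:ZMod m) + 1) * τ + τ = i₀ - (j:ZMod m) * τ := by ring
    rw [e1, e2] at h
    simp only [hD, hSn]
    push_cast
    convert h using 3 <;> push_cast <;> ring
  have hD0 : D 0 = 1 := by
    simp only [hD]
    push_cast
    rw [zero_mul, sub_zero]
    exact hd₀
  exact core_lemma k hkodd D Sn hDper hSper hR hD0


def chiZ (z : ZMod 2) : ℤ := (-1) ^ z.val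

lemma chiZ_add : ∀ a b : ZMod 2, chiZ (a + b) = chiZ a * chiZ b := by decide

lemma chiZ_zero : chiZ 0 = 1 := by decide

lemma chiZ_sum {ι : Type*} (F : Finset ι) (g : ι → ZMod 2) :
    chiZ (∑ j ∈ F, g j) = ∏ j ∈ F, chiZ (g j) := by
  classical
  induction F using Finset.cons_induction with
  | empty => simp [chiZ_zero]
  | cons a F ha ih => rw [Finset.sum_cons, Finset.prod_cons, chiZ_add, ih]

lemma zmod_sum_range {M : Type*} [AddCommMonoid M] (n : ℕ) [NeZero n] (g : ZMod n → M) :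
    ∑ i : ZMod n, g i = ∑ i ∈ Finset.range n, g ↑i := by
  refine Finset.sum_nbij' (fun (i : ZMod n) => i.val) (fun (i : ℕ) => (i : ZMod n))
    ?_ ?_ ?_ ?_ ?_
  · intro a _; exact Finset.mem_range.mpr (ZMod.val_lt a)
  · intro a _; exact Finset.mem_univ _
  · intro a _; show ((a.val : ℕ) : ZMod n) = a; rw [ZMod.natCast_val, ZMod.cast_id]
  · intro a ha; exact ZMod.val_cast_of_lt (Finset.mem_range.mp ha)
  · intro a _; show g a = g ((a.val : ℕ) : ZMod n); rw [ZMod.natCast_val, ZMod.cast_id]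

lemma sum_chi_mul (m : ℕ) [NeZero m] (L : ZMod m → ZMod 2) :
    ∑ u : ZMod m → ZMod 2, chiZ (∑ j, u j * L j)
      = if ∀ j, L j = 0 then 2 ^ m else 0 := by
  have h1 : ∀ u : ZMod m → ZMod 2, chiZ (∑ j, u j * L j) = ∏ j, chiZ (u j * L j) :=
    fun u => chiZ_sum _ _
  simp_rw [h1]
  rw [← Fintype.prod_sum (fun (j : ZMod m) (a : ZMod 2) => chiZ (a * L j))]
  have h2 : ∀ j, (∑ a : ZMod 2, chiZ (a * L j)) = if L j = 0 then 2 else 0 := by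
    intro j
    rcases zm2 (L j) with h | h <;> rw [h] <;> decide
  simp_rw [h2]
  by_cases hL : ∀ j, L j = 0
  · rw [if_pos hL]
    have : ∀ j : ZMod m, (if L j = 0 then (2:ℤ) else 0) = 2 := fun j => if_pos (hL j)
    simp_rw [this]
    rw [Finset.prod_const, Finset.card_univ, ZMod.card]
  · rw [if_neg hL]
    push_neg at hL
    obtain ⟨j, hj⟩ := hL
    exact Finset.prod_eq_zero (Finset.mem_univ j) (by simp [hj])

section Glue
variable (m : ℕ) [NeZero m]

def glueMap (p : (ZMod m → ZMod 2) × (ZMod m → ZMod 2)) : ZMod (2*m) → ZMod 2 :=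
  fun ι => p.1 ((ι.val : ℕ) : ZMod m) + (if ι.val < m then 0 else p.2 ((ι.val : ℕ) : ZMod m))

lemma hm_pos : 0 < m := Nat.pos_of_ne_zero (NeZero.ne m)

lemma cast_factor (i : ℕ) : ((((i : ZMod (2*m))).val : ℕ) : ZMod m) = (i : ZMod m) := by
  rw [ZMod.val_natCast]
  have h2m : ((2*m : ℕ) : ZMod m) = 0 := by
    push_cast
    simp
  conv_rhs => rw [← Nat.mod_add_div i (2*m)]
  push_cast at h2m ⊢
  rw [h2m]
  ring

lemma glue_low (u s : ZMod m → ZMod 2) (i : ℕ) (hi : i < m) :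
    glueMap m (u, s) ↑i = u ↑i := by
  have hv : ((i : ZMod (2*m))).val = i := ZMod.val_cast_of_lt (by have := hm_pos m; omega)
  unfold glueMap
  simp only [hv, if_pos hi, add_zero]

lemma glue_high (u s : ZMod m → ZMod 2) (i : ℕ) (hi : i < m) :
    glueMap m (u, s) ↑(i + m) = u ↑i + s ↑i := by
  have hv : (((i + m : ℕ) : ZMod (2*m))).val = i + m := ZMod.val_cast_of_lt (by omega)
  have hc : (((i + m : ℕ)) : ZMod m) = (i : ZMod m) := by push_cast; simp
  unfold glueMap
  simp only [hv, if_neg (by omega : ¬ (i + m < m)), hc]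

lemma glue_bijective : Function.Bijective (glueMap m) := by
  rw [Fintype.bijective_iff_injective_and_card]
  constructor
  · intro p q h
    have key : ∀ j : ZMod m, j.val < m ∧ ((j.val : ℕ) : ZMod m) = j := by
      intro j
      exact ⟨ZMod.val_lt j, by rw [ZMod.natCast_val, ZMod.cast_id]⟩
    have h1 : ∀ j : ZMod m, p.1 j = q.1 j := by
      intro j
      obtain ⟨hlt, hj⟩ := key j
      have := congrFun h ((j.val : ℕ) : ZMod (2*m))
      rw [show p = (p.1, p.2) from rfl, show q = (q.1, q.2) from rfl] at this
      rw [glue_low m p.1 p.2 j.val hlt, glue_low m q.1 q.2 j.val hlt, hj] at this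
      exact this
    have h2 : ∀ j : ZMod m, p.2 j = q.2 j := by
      intro j
      obtain ⟨hlt, hj⟩ := key j
      have := congrFun h (((j.val + m : ℕ)) : ZMod (2*m))
      rw [show p = (p.1, p.2) from rfl, show q = (q.1, q.2) from rfl] at this
      rw [glue_high m p.1 p.2 j.val hlt, glue_high m q.1 q.2 j.val hlt, hj] at this
      have h1j := h1 j
      rw [h1j] at this
      exact add_left_cancel this
    exact Prod.ext (funext h1) (funext h2)
  · rw [Fintype.card_prod, Fintype.card_fun, Fintype.card_fun, ZMod.card, ZMod.card, ZMod.card]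
    rw [← pow_add, two_mul]
end Glue


section MainId
variable (m t : ℕ) [NeZero m]

lemma main_identity (htm : t < m)
    (γ : (ZMod m → ZMod 2) → ZMod 2)
    (f : (ZMod (2 * m) → ZMod 2) → ZMod 2)
    (hf : ∀ x : ZMod (2 * m) → ZMod 2,
      f x = ∑ i ∈ Finset.range (2 * m), (x i * x (i + t) * x (i + m) + x i * x (i + t)) +
        ∑ i ∈ Finset.range m, x i * x (i + m) +
        γ (fun j : ZMod m => x j.val + x (j.val + m : ZMod (2 * m))))
    (b : ZMod (2 * m) → ZMod 2) (u s : ZMod m → ZMod 2) :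
    f (glueMap m (u, s)) + ∑ ι : ZMod (2*m), glueMap m (u, s) ι * b ι
      = (∑ j : ZMod m, u j * (phiMap m t s j + (b ↑(j.val) + b ↑(j.val + m))))
        + ((∑ i ∈ Finset.range m, (if i + t < m then 0 else s ↑(i+t) * s ↑i))
          + (∑ i ∈ Finset.range m, s ↑i * s ↑(i+t))
          + γ s
          + (∑ i ∈ Finset.range m, s ↑i * b ↑(i+m))) := by
  have hm : 0 < m := Nat.pos_of_ne_zero (NeZero.ne m)
  simp only [← Nat.cast_add] at hf
  set x : ZMod (2*m) → ZMod 2 := glueMap m (u, s) with hx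
  set τ : ZMod m := (t : ZMod m) with hτ
  -- basic facts
  have hX1 : ∀ i, i < m → x ↑i = u ↑i := fun i hi => glue_low m u s i hi
  have hX2 : ∀ i, i < m → x ↑(i + m) = u ↑i + s ↑i := fun i hi => glue_high m u s i hi
  have hXper : ∀ i : ℕ, x ↑(i + 2*m) = x ↑i := by
    intro i
    congr 1
    rw [Nat.cast_add, ZMod.natCast_self, add_zero]
  have hsper : ∀ i : ℕ, s ↑(i + m) = s ↑i := by
    intro i
    congr 1
    rw [Nat.cast_add, ZMod.natCast_self, add_zero]
  have hX3 : ∀ i : ℕ, x ↑(i + m) = x ↑i + s ↑i := by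
    intro i
    induction i using Nat.strong_induction_on with
    | _ i ih =>
      by_cases hi : i < m
      · rw [hX1 i hi, hX2 i hi]
      · push_neg at hi
        obtain ⟨j, rfl⟩ : ∃ j, i = j + m := ⟨i - m, by omega⟩
        have h1 : x ↑(j + m + m) = x ↑j := by
          rw [show j + m + m = j + 2*m by ring, hXper]
        have h2 : x ↑(j + m) = x ↑j + s ↑j := ih j (by omega)
        have h3 : s ↑(j + m) = s ↑j := hsper j
        rw [h1, h2, h3]
        have : ∀ a b : ZMod 2, a = a + b + b := by decide
        exact this _ _
  -- rewrite f
  rw [hf x]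
  have hsplit2 : ∀ g : ℕ → ZMod 2, ∑ i ∈ Finset.range (2*m), g i
      = ∑ i ∈ Finset.range m, g i + ∑ i ∈ Finset.range m, g (m+i) := by
    intro g
    rw [two_mul]
    exact Finset.sum_range_add g m m
  -- cubic+quadratic sum
  have hA1 : ∑ i ∈ Finset.range (2*m), (x ↑i * x ↑(i+t) * x ↑(i+m) + x ↑i * x ↑(i+t))
      = ∑ i ∈ Finset.range (2*m), x ↑i * x ↑(i+t) * s ↑i := by
    refine Finset.sum_congr rfl fun i _ => ?_
    rw [hX3 i]
    have : ∀ a c σ : ZMod 2, a*c*(a+σ) + a*c = a*c*σ := by decide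
    exact this _ _ _
  have hA2 : ∑ i ∈ Finset.range (2*m), x ↑i * x ↑(i+t) * s ↑i
      = ∑ i ∈ Finset.range m,
          (x ↑i * (s ↑i * s ↑(i+t)) + x ↑(i+t) * s ↑i + s ↑i * s ↑(i+t)) := by
    rw [hsplit2 (fun i => x ↑i * x ↑(i+t) * s ↑i), ← Finset.sum_add_distrib]
    refine Finset.sum_congr rfl fun i hi => ?_
    have e1 : x ↑(m+i) = x ↑i + s ↑i := by rw [Nat.add_comm m i, hX3]
    have e2 : x ↑(m+i+t) = x ↑(i+t) + s ↑(i+t) := by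
      rw [show m+i+t = (i+t)+m by ring, hX3]
    have e3 : s ↑(m+i) = s ↑i := by rw [Nat.add_comm m i, hsper]
    rw [e1, e2, e3]
    have : ∀ a c p q : ZMod 2, a*c*p + (a+p)*(c+q)*p = a*(p*q) + c*p + p*q := by decide
    exact this _ _ _ _
  have hA3 : ∑ i ∈ Finset.range m,
          (x ↑i * (s ↑i * s ↑(i+t)) + x ↑(i+t) * s ↑i + s ↑i * s ↑(i+t))
      = (∑ i ∈ Finset.range m, x ↑i * (s ↑i * s ↑(i+t)))
        + (∑ i ∈ Finset.range m, x ↑(i+t) * s ↑i)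
        + (∑ i ∈ Finset.range m, s ↑i * s ↑(i+t)) := by
    rw [Finset.sum_add_distrib, Finset.sum_add_distrib]
  -- middle term
  have hM : ∑ i ∈ Finset.range m, x ↑(i+t) * s ↑i
      = (∑ i ∈ Finset.range m, u ↑(i+t) * s ↑i)
        + ∑ i ∈ Finset.range m, (if i + t < m then 0 else s ↑(i+t) * s ↑i) := by
    rw [← Finset.sum_add_distrib]
    refine Finset.sum_congr rfl fun i hi => ?_
    by_cases hit : i + t < m
    · rw [hX1 _ hit, if_pos hit, add_zero]
    · push_neg at hit
      obtain ⟨j, hj⟩ : ∃ j, i + t = j + m := ⟨i + t - m, by omega⟩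
      have hjm : j < m := by
        have hi' : i < m := Finset.mem_range.mp hi
        omega
      have hxit : x ↑(i+t) = u ↑(i+t) + s ↑(i+t) := by
        rw [hj, hX3 j, hX1 j hjm, hsper j]
        rw [show ((j + m : ℕ) : ZMod m) = ↑j by
          rw [Nat.cast_add, ZMod.natCast_self, add_zero]]
      rw [hxit, if_neg (by omega), add_mul]
  have hM1 : ∑ i ∈ Finset.range m, u ↑(i+t) * s ↑i
      = ∑ j : ZMod m, u j * s (j - τ) := by
    have step : ∑ i ∈ Finset.range m, u ↑(i+t) * s ↑i
        = ∑ i ∈ Finset.range m, (fun j : ZMod m => u (j + τ) * s j) ↑i := by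
      refine Finset.sum_congr rfl fun i _ => ?_
      simp only [hτ]
      rw [Nat.cast_add]
    rw [step, ← zmod_sum_range m (fun j : ZMod m => u (j + τ) * s j)]
    refine Fintype.sum_equiv (Equiv.addRight τ) _ _ fun j => ?_
    simp only [Equiv.coe_addRight]
    rw [add_sub_cancel_right]
  -- third sum
  have hB : ∑ i ∈ Finset.range m, x ↑i * x ↑(i+m)
      = ∑ i ∈ Finset.range m, u ↑i * (1 + s ↑i) := by
    refine Finset.sum_congr rfl fun i hi => ?_
    rw [hX3 i, hX1 i (Finset.mem_range.mp hi)]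
    have : ∀ a σ : ZMod 2, a * (a + σ) = a * (1 + σ) := by decide
    exact this _ _
  -- gamma argument
  have hγ : γ (fun j : ZMod m => x ↑(j.val) + x ↑(j.val + m)) = γ s := by
    congr 1
    funext j
    have hjv : j.val < m := ZMod.val_lt j
    rw [hX3 j.val, hX1 j.val hjv]
    rw [show ((j.val : ℕ) : ZMod m) = j by rw [ZMod.natCast_val, ZMod.cast_id]]
    have : ∀ a c : ZMod 2, a + (a + c) = c := by decide
    exact this _ _
  -- linear part
  have hL : ∑ ι : ZMod (2*m), x ι * b ι
      = (∑ j : ZMod m, u j * (b ↑(j.val) + b ↑(j.val + m)))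
        + ∑ i ∈ Finset.range m, s ↑i * b ↑(i+m) := by
    rw [zmod_sum_range (2*m) (fun ι => x ι * b ι),
      hsplit2 (fun i => x ↑i * b ↑i), ← Finset.sum_add_distrib]
    have hterm : ∀ i ∈ Finset.range m,
        x ↑i * b ↑i + x ↑(m+i) * b ↑(m+i)
        = (fun j : ZMod m => u j * (b ↑(j.val) + b ↑(j.val + m))) ↑i
          + s ↑i * b ↑(i+m) := by
      intro i hi
      have hi' := Finset.mem_range.mp hi
      simp only []
      rw [show ((i : ZMod m)).val = i from ZMod.val_cast_of_lt hi']
      rw [Nat.add_comm m i, hX1 i hi', hX3 i, hX1 i hi']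
      have : ∀ a σ p q : ZMod 2, a*p + (a+σ)*q = a*(p+q) + σ*q := by decide
      exact this _ _ _ _
    rw [Finset.sum_congr rfl hterm, Finset.sum_add_distrib,
      ← zmod_sum_range m (fun j : ZMod m => u j * (b ↑(j.val) + b ↑(j.val + m)))]
  -- u-sums to ZMod sums
  have hP1 : ∑ i ∈ Finset.range m, x ↑i * (s ↑i * s ↑(i+t))
      = ∑ j : ZMod m, u j * (s j * s (j + τ)) := by
    rw [zmod_sum_range m (fun j : ZMod m => u j * (s j * s (j + τ)))]
    refine Finset.sum_congr rfl fun i hi => ?_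
    rw [hX1 i (Finset.mem_range.mp hi), hτ, Nat.cast_add]
  have hP3 : ∑ i ∈ Finset.range m, u ↑i * (1 + s ↑i)
      = ∑ j : ZMod m, u j * (1 + s j) := by
    rw [zmod_sum_range m (fun j : ZMod m => u j * (1 + s j))]
  -- expand RHS
  have hRHS : ∑ j : ZMod m, u j * (phiMap m t s j + (b ↑(j.val) + b ↑(j.val + m)))
      = (∑ j : ZMod m, u j * (s j * s (j + τ)))
        + (∑ j : ZMod m, u j * s (j - τ))
        + (∑ j : ZMod m, u j * (1 + s j))
        + (∑ j : ZMod m, u j * (b ↑(j.val) + b ↑(j.val + m))) := by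
    rw [← Finset.sum_add_distrib, ← Finset.sum_add_distrib, ← Finset.sum_add_distrib]
    refine Finset.sum_congr rfl fun j _ => ?_
    unfold phiMap
    rw [← hτ]
    ring
  rw [hA1, hA2, hA3, hM, hM1, hB, hγ, hL, hP1, hP3, hRHS]
  ring
end MainId

/-- with `n = 2m`, `m ≥ 1`, `1 ≤ t ≤ m-1` with `m / gcd(m,t)` odd, and any
Boolean function `γ` on `𝔽₂^m`, the function
`f_t(x) = Σ_{i=0}^{n-1} (xᵢ·x_{i+t}·x_{i+m} + xᵢ·x_{i+t}) + Σ_{i=0}^{m-1} xᵢ·x_{i+m}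
          + γ(x₀+x_m, …, x_{m-1}+x_{2m-1})` is bent. -/
theorem statement3 (m t : ℕ) (hm : 1 ≤ m) [NeZero m]
    (ht1 : 1 ≤ t) (ht2 : t ≤ m - 1) (hodd : Odd (m / Nat.gcd m t))
    (γ : (ZMod m → ZMod 2) → ZMod 2)
    (f : (ZMod (2 * m) → ZMod 2) → ZMod 2)
    (hf : ∀ x : ZMod (2 * m) → ZMod 2,
      f x = ∑ i ∈ Finset.range (2 * m), (x i * x (i + t) * x (i + m) + x i * x (i + t)) +
        ∑ i ∈ Finset.range m, x i * x (i + m) +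
        γ (fun j : ZMod m => x j.val + x (j.val + m : ZMod (2 * m)))) :
    IsBent f := by
  intro b
  have htm : t < m := by omega
  have hmm : (2 * m) / 2 = m := by omega
  -- the linear-part character on ZMod m
  set βb : ZMod m → ZMod 2 := fun j => b ↑(j.val) + b ↑(j.val + m) with hβb
  set K : (ZMod m → ZMod 2) → ZMod 2 := fun s =>
    (∑ i ∈ Finset.range m, (if i + t < m then 0 else s ↑(i+t) * s ↑i))
    + (∑ i ∈ Finset.range m, s ↑i * s ↑(i+t)) + γ s
    + (∑ i ∈ Finset.range m, s ↑i * b ↑(i+m)) with hK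
  have hexp : ∀ u s : ZMod m → ZMod 2,
      f (glueMap m (u, s)) + ∑ ι : ZMod (2*m), glueMap m (u, s) ι * b ι
        = (∑ j : ZMod m, u j * (phiMap m t s j + βb j)) + K s := by
    intro u s
    exact main_identity m t htm γ f hf b u s
  set e : (ZMod m → ZMod 2) ≃ (ZMod m → ZMod 2) :=
    Equiv.ofBijective (phiMap m t) (phiMap_bijective m t hodd) with he
  have happ : ∀ s, e s = phiMap m t s := fun s => by rw [he, Equiv.ofBijective_apply]
  have hW0 : walshTransform f b
      = ∑ p : (ZMod m → ZMod 2) × (ZMod m → ZMod 2),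
          chiZ (f (glueMap m p) + ∑ ι : ZMod (2*m), glueMap m p ι * b ι) :=
    (Fintype.sum_bijective (glueMap m) (glue_bijective m)
      (fun p => chiZ (f (glueMap m p) + ∑ ι : ZMod (2*m), glueMap m p ι * b ι))
      (fun x => chiZ (f x + ∑ i : ZMod (2*m), x i * b i)) (fun p => rfl)).symm
  have hW : walshTransform f b
      = ∑ p : (ZMod m → ZMod 2) × (ZMod m → ZMod 2),
          chiZ ((∑ j : ZMod m, p.1 j * (phiMap m t p.2 j + βb j)) + K p.2) := by
    rw [hW0]
    refine Finset.sum_congr rfl fun p _ => ?_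
    obtain ⟨u, s⟩ := p
    exact congrArg chiZ (hexp u s)
  rw [hW, Fintype.sum_prod_type_right]
  have hinner : ∀ s : ZMod m → ZMod 2,
      (∑ u : ZMod m → ZMod 2,
        chiZ ((∑ j : ZMod m, u j * (phiMap m t s j + βb j)) + K s))
      = (if phiMap m t s = βb then ((2:ℤ)^m) else 0) * chiZ (K s) := by
    intro s
    have h1 : ∀ u : ZMod m → ZMod 2,
        chiZ ((∑ j : ZMod m, u j * (phiMap m t s j + βb j)) + K s)
        = chiZ (∑ j : ZMod m, u j * (phiMap m t s j + βb j)) * chiZ (K s) := by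
      intro u
      rw [chiZ_add]
    simp_rw [h1]
    rw [← Finset.sum_mul, sum_chi_mul m (fun j => phiMap m t s j + βb j)]
    congr 1
    have hz : ∀ a c : ZMod 2, (a + c = 0) ↔ (a = c) := by decide
    have : (∀ j, phiMap m t s j + βb j = 0) ↔ phiMap m t s = βb := by
      rw [funext_iff]
      exact forall_congr' fun j => hz _ _
    simp only [this]
  simp_rw [hinner]
  have hcond : ∀ s : ZMod m → ZMod 2, (phiMap m t s = βb) ↔ (s = e.symm βb) := by
    intro s
    rw [← happ s]
    exact e.apply_eq_iff_eq_symm_apply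
  simp_rw [hcond, ite_mul, zero_mul]
  rw [Finset.sum_ite_eq' Finset.univ (e.symm βb) (fun s => (2:ℤ)^m * chiZ (K s))]
  rw [if_pos (Finset.mem_univ _), hmm]
  have : ∀ z : ZMod 2, chiZ z = 1 ∨ chiZ z = -1 := by decide
  rcases this (K (e.symm βb)) with h | h <;> rw [h]
  · left; ring
  · right; ring
end

section
/- Let m ≥ 1 and let t be an integer with 1 ≤ t ≤ m-1 such that m/gcd(m,t) is odd. Define π : 𝔽₂^m → 𝔽₂^m by π(a)_i = a_i·a_{i+t} + a_{i+t} + a_{i+m-t} for 0 ≤ i ≤ m-1, with indices taken modulo m. Then π is a bijection of 𝔽₂^m. -/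
/-- with `m ≥ 1` and `1 ≤ t ≤ m-1` such that `m / gcd(m,t)` is odd, the map
`π : 𝔽₂^m → 𝔽₂^m` given by `π(a)ᵢ = aᵢ·a_{i+t} + a_{i+t} + a_{i+m-t}` (indices modulo `m`)
is a bijection of `𝔽₂^m`. -/
theorem statement11 (m t : ℕ) (hm : 1 ≤ m) [NeZero m]
    (ht1 : 1 ≤ t) (ht2 : t ≤ m - 1) (hodd : Odd (m / Nat.gcd m t))
    (π : (ZMod m → ZMod 2) → (ZMod m → ZMod 2))
    (hπ : ∀ (a : ZMod m → ZMod 2) (i : ZMod m),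
      π a i = a i * a (i + t) + a (i + t) + a (i + m - t)) :
    Function.Bijective π := by
  set n := m / Nat.gcd m t with hn
  have hn2 : n % 2 = 1 := Nat.odd_iff.mp hodd
  have hn1 : 1 ≤ n := hodd.pos
  -- m ∣ n * t
  have hnt0 : ((n * t : ℕ) : ZMod m) = 0 := by
    obtain ⟨s, hs⟩ := Nat.gcd_dvd_right m t
    have hdvd : m ∣ n * t := by
      refine ⟨s, ?_⟩
      rw [hs, ← Nat.mul_assoc, hn, Nat.div_mul_cancel (Nat.gcd_dvd_left m t)]
    exact (ZMod.natCast_eq_zero_iff _ _).mpr hdvd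
  have hnt0' : ((n : ℕ) : ZMod m) * ((t : ℕ) : ZMod m) = 0 := by
    have h0 := hnt0
    push_cast at h0
    exact h0
  -- the key recurrence: c i = π c (i+t) + (π c (i+2t)+1) * c (i+2t)
  have bar : ∀ (c : ZMod m → ZMod 2) (j : ZMod m),
      c j = π c (j + ↑t) + (π c (j + ↑t + ↑t) + 1) * c (j + ↑t + ↑t) := by
    intro c j
    have e1 := hπ c (j + ↑t)
    have e2 := hπ c (j + ↑t + ↑t)
    have hm0 : ((m : ℕ) : ZMod m) = 0 := ZMod.natCast_self m
    rw [hm0] at e1 e2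
    have r1 : j + ↑t + 0 - ↑t = j := by ring
    have r2 : j + ↑t + ↑t + 0 - ↑t = j + ↑t := by ring
    rw [r1] at e1
    rw [r2] at e2
    rw [e1, e2]
    generalize c j = x
    generalize c (j + ↑t) = u
    generalize c (j + ↑t + ↑t) = v
    generalize c (j + ↑t + ↑t + ↑t) = w
    revert x u v w
    decide
  apply Function.Injective.bijective_of_finite
  intro a a' h
  funext i
  by_cases hc : ∀ k : ℕ, 1 ≤ k → π a (i + ↑(2 * k * t)) = 0
  · -- π a vanishes on the whole orbit: both a and a' vanish at i
    have H0 : ∀ s : ℕ, π a (i + ↑(s * t)) = 0 := by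
      intro s
      by_cases hs2 : s % 2 = 0
      · have h1 := hc (s / 2 + n) (by omega)
        have hk : 2 * (s / 2 + n) * t = s * t + 2 * (n * t) := by
          have h2 : 2 * (s / 2 + n) = s + 2 * n := by omega
          rw [h2]; ring
        have hcast : ((s * t + 2 * (n * t) : ℕ) : ZMod m) = ↑(s * t) := by
          push_cast
          rw [hnt0']
          ring
        rw [hk, hcast] at h1
        exact h1
      · have h1 := hc ((s + n) / 2) (by omega)
        have hk : 2 * ((s + n) / 2) * t = s * t + n * t := by
          have h2 : 2 * ((s + n) / 2) = s + n := by omega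
          rw [h2]; ring
        have hcast : ((s * t + n * t : ℕ) : ZMod m) = ↑(s * t) := by
          push_cast
          rw [hnt0']
          ring
        rw [hk, hcast] at h1
        exact h1
    have final : ∀ c : ZMod m → ZMod 2, π c = π a → c i = 0 := by
      intro c heq
      have hbar : ∀ j, c j = π a (j + ↑t) + (π a (j + ↑t + ↑t) + 1) * c (j + ↑t + ↑t) := by
        intro j
        have := bar c j
        rwa [heq] at this
      have H1 : ∀ s : ℕ, c (i + ↑(s * t)) = c (i + ↑((s + 2) * t)) := by
        intro s
        have e := hbar (i + ↑(s * t))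
        have i2 : i + ((s * t : ℕ) : ZMod m) + ↑t + ↑t = i + ↑((s + 2) * t) := by
          push_cast; ring
        have i1 : i + ((s * t : ℕ) : ZMod m) + ↑t = i + ↑((s + 1) * t) := by
          push_cast; ring
        rw [i2, i1] at e
        rw [H0 (s + 1), H0 (s + 2)] at e
        simpa using e
      have H2 : ∀ (k s : ℕ), c (i + ↑(s * t)) = c (i + ↑((s + 2 * k) * t)) := by
        intro k
        induction k with
        | zero => intro s; norm_num
        | succ k ih =>
          intro s
          have h2 : s + 2 * (k + 1) = s + 2 * k + 2 := by ring
          rw [h2, ih s]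
          exact H1 (s + 2 * k)
      have hc1 : c (i + ↑t) = c i := by
        have e := H2 ((n + 1) / 2) 0
        have h2 : 0 + 2 * ((n + 1) / 2) = n + 1 := by omega
        rw [h2] at e
        have hcast : i + (((n + 1) * t : ℕ) : ZMod m) = i + ↑t := by
          have h3 : (n + 1) * t = n * t + t := by ring
          rw [h3, Nat.cast_add, hnt0, zero_add]
        rw [hcast] at e
        simpa using e.symm
      have hc2 : c (i - ↑t) = c i := by
        have e := H2 ((n - 1) / 2) 0
        have h2 : 0 + 2 * ((n - 1) / 2) = n - 1 := by omega
        rw [h2] at e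
        have hcast : i + (((n - 1) * t : ℕ) : ZMod m) = i - ↑t := by
          have h3 : ((n - 1) * t + t : ℕ) = n * t := by
            have h4 : n - 1 + 1 = n := by omega
            calc (n - 1) * t + t = (n - 1 + 1) * t := by ring
              _ = n * t := by rw [h4]
          have h5 : (((n - 1) * t : ℕ) : ZMod m) + ↑t = 0 := by
            rw [← Nat.cast_add, h3, hnt0]
          have h6 : (((n - 1) * t : ℕ) : ZMod m) = -↑t := by
            linear_combination h5
          rw [h6]; ring
        rw [hcast] at e
        simpa using e.symm
      have hb0 : π a i = 0 := by
        have e := H0 0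
        simpa using e
      have e := hπ c i
      rw [heq, hb0] at e
      have hm0 : ((m : ℕ) : ZMod m) = 0 := ZMod.natCast_self m
      rw [hm0] at e
      have r1 : i + 0 - ↑t = i - ↑t := by ring
      rw [r1, hc1, hc2] at e
      -- e : 0 = c i * c i + c i + c i
      have : ∀ x : ZMod 2, (0 : ZMod 2) = x * x + x + x → x = 0 := by decide
      exact this _ e
    rw [final a rfl, final a' h.symm]
  · push_neg at hc
    obtain ⟨k, hk1, hk2⟩ := hc
    have hone : π a (i + ↑(2 * k * t)) = 1 := by
      revert hk2
      generalize π a (i + ((2 * k * t : ℕ) : ZMod m)) = x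
      revert x; decide
    have hstep : ∀ j, a j - a' j
        = (π a (j + ↑t + ↑t) + 1) * (a (j + ↑t + ↑t) - a' (j + ↑t + ↑t)) := by
      intro j
      have h1 := bar a j
      have h2 := bar a' j
      rw [← h] at h2
      linear_combination h1 - h2
    have P : ∀ K : ℕ, a i - a' i
        = (∏ j ∈ Finset.range K, (π a (i + ↑(2 * (j + 1) * t)) + 1))
          * (a (i + ↑(2 * K * t)) - a' (i + ↑(2 * K * t))) := by
      intro K
      induction K with
      | zero => norm_num
      | succ K ih =>
        rw [Finset.prod_range_succ]
        have hj := hstep (i + ↑(2 * K * t))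
        have e2 : i + ((2 * K * t : ℕ) : ZMod m) + ↑t + ↑t = i + ↑(2 * (K + 1) * t) := by
          push_cast; ring
        rw [e2] at hj
        rw [ih, hj]; ring
    have hP := P k
    have hzero : (∏ j ∈ Finset.range k, (π a (i + ↑(2 * (j + 1) * t)) + 1)) = 0 := by
      apply Finset.prod_eq_zero (Finset.mem_range.mpr (show k - 1 < k by omega))
      have h3 : k - 1 + 1 = k := by omega
      rw [h3, hone]
      decide
    rw [hzero, zero_mul] at hP
    exact sub_eq_zero.mp hP
end
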